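/- arXiv:2010.00107 — 2 statements merged into one kernel-verified Lean document; each statement's English description precedes it below -/
import Mathlib

section
/- Let SG be the unique nonempty compact subset of ℝ² satisfying SG = F₀(SG) ∪ F₁(SG) ∪ F₂(SG), and let V* be the union, over all m ≥ 0 and all words w ∈ {0,1,2}^m, of the sets F_w({q0, q1, q2}). Let f : SG → ℝ be continuous and suppose its zero set Z = {x ∈ SG : f(x) = 0} is finite; set Z₀ = Z ∩ V*. Then for every connected component D of SG \ Z₀ (in the subspace topology of SG), either f(x) ≥ 0 for all x ∈ D, or f(x) ≤ 0 for all x ∈ D. -/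
noncomputable def q : Fin 3 → ℝ × ℝ
  | 0 => (1 / 2, Real.sqrt 3 / 2)
  | 1 => (0, 0)
  | 2 => (1, 0)

noncomputable def F (i : Fin 3) (x : ℝ × ℝ) : ℝ × ℝ := (1 / 2 : ℝ) • (x + q i)

noncomputable def Fw : List (Fin 3) → ℝ × ℝ → ℝ × ℝ
  | [] => id
  | i :: w => F i ∘ Fw w

noncomputable def Vstar : Set (ℝ × ℝ) :=
  ⋃ w : List (Fin 3), Fw w '' {q 0, q 1, q 2}

/-!
The barycentric coordinates of `SG` with respect to the triangle `q 0 q 1 q 2` are nonnegative: the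
minimum `m` of a coordinate over `SG` is attained at some `F i y`, where the coordinate is at least
half its value at `y`, hence at least `m / 2`. Hence two first-level cells `F i SG`, `F j SG` meet
only in the vertex `F j (q i)`, and a point outside `V*` lies in exactly one cell of each level.

Since the cells shrink geometrically and neighbouring cells share a vertex, `SG` is connected, and
the unions of the `n`-cells through a point form a basis of connected neighbourhoods, so `SG` is
locally connected and the component `D` is open. For `z ∉ V*`, the `n`-cell of `z` is a
neighbourhood of `z`, and `SG \ {z}` is the union over `n` of the connected unions of the other
`n`-cells, which share a vertex. So removing a point outside `V*` from a connected open subset of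
`SG` keeps it connected. The zeros of `f` in `D` lie outside `V*`, so `f` has no zero on the
connected set `D \ f⁻¹(0)`, and by the intermediate value theorem its sign is constant there.
-/

open Set Metric Filter Topology

lemma exists_div_two_pow_lt (c : ℝ) {ε : ℝ} (hε : 0 < ε) : ∃ n : ℕ, c / 2 ^ n < ε := by
  obtain ⟨n, hn⟩ := pow_unbounded_of_one_lt (c / ε) one_lt_two
  exact ⟨n, (div_lt_iff₀ (by positivity)).2 ((div_lt_iff₀ hε).1 hn |>.trans_eq (mul_comm _ _))⟩

lemma Fin.eq_or_eq_add_one_or_eq_add_two (c d : Fin 3) : d = c ∨ d = c + 1 ∨ d = c + 2 := by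
  revert c d; decide

lemma Fin.exists_ne_and_eq_add_one_or_eq_add_two (c d : Fin 3) :
    ∃ t, t ≠ d ∧ (t = c + 1 ∨ t = c + 2) := by
  revert c d; decide

lemma isPreconnected_preimage_val {X : Type*} [TopologicalSpace X] {s t : Set X} (hts : t ⊆ s)
    (ht : IsPreconnected t) : IsPreconnected (((↑) : s → X) ⁻¹' t) := by
  rwa [← Topology.IsInducing.subtypeVal.isPreconnected_image, Subtype.image_preimage_coe,
    inter_eq_right.2 hts]

theorem IsPreconnected.diff_singleton_of_mem_nhds {X : Type*} [TopologicalSpace X] [T1Space X]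
    {U N : Set X} {p : X} (hU : IsPreconnected U) (hN : N ∈ 𝓝 p) (hNU : N ⊆ U)
    (hNp : IsPreconnected (N \ {p})) : IsPreconnected (U \ {p}) := by
  rw [isPreconnected_iff_subset_of_disjoint] at hU hNp ⊢
  intro u v hu hv hcover hdisj
  have hNcover : N \ {p} ⊆ u ∪ v := (sdiff_subset_sdiff_left hNU).trans hcover
  have hNdisj : N \ {p} ∩ (u ∩ v) = ∅ :=
    subset_empty_iff.1 (hdisj ▸ inter_subset_inter_left _ (sdiff_subset_sdiff_left hNU))
  wlog hNu : N \ {p} ⊆ u generalizing u v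
  · rw [or_comm]
    refine this v u hv hu (union_comm u v ▸ hcover) (inter_comm u v ▸ hdisj)
      (union_comm u v ▸ hNcover) (inter_comm u v ▸ hNdisj) ?_
    exact (hNp u v hu hv hNcover hNdisj).resolve_left hNu
  -- `N` glues `p` to the side `u` of `N \ {p}`
  left
  have hside := hU (u ∪ interior N) (v \ {p}) (hu.union isOpen_interior)
    (hv.sdiff isClosed_singleton) ?_ ?_
  · rcases hside with hside | hside
    · intro x ⟨hxU, hxp⟩
      rcases hside hxU with hxu | hxN
      exacts [hxu, hNu ⟨interior_subset hxN, hxp⟩]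
    · exact ((hside (hNU (mem_of_mem_nhds hN))).2 rfl).elim
  · intro x hxU
    by_cases hxp : x = p
    · exact Or.inl (Or.inr (hxp ▸ mem_interior_iff_mem_nhds.2 hN))
    · rcases hcover ⟨hxU, hxp⟩ with hxu | hxv
      exacts [Or.inl (Or.inl hxu), Or.inr ⟨hxv, hxp⟩]
  · refine eq_empty_of_forall_notMem fun x ⟨hxU, hxuN, hxv, hxp⟩ => ?_
    have hxu : x ∈ u := hxuN.elim id fun hxN => hNu ⟨interior_subset hxN, hxp⟩
    exact hdisj.subset ⟨⟨hxU, hxp⟩, hxu, hxv⟩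

theorem IsPreconnected.diff_of_finite {X : Type*} [TopologicalSpace X] [T1Space X]
    {U P : Set X} (hU : IsPreconnected U) (hUo : IsOpen U) (hP : P.Finite)
    (hloc : ∀ p ∈ P, ∀ V ∈ 𝓝 p, ∃ N ∈ 𝓝 p, N ⊆ V ∧ IsPreconnected (N \ {p})) :
    IsPreconnected (U \ P) := by
  induction P, hP using Set.Finite.induction_on with
  | empty => simpa using hU
  | @insert a P _ hP ih =>
    rw [insert_eq, union_comm, ← sdiff_sdiff]
    have hUP := ih fun p hp => hloc p (mem_insert_of_mem a hp)
    by_cases ha : a ∈ U \ P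
    · obtain ⟨N, hN, hNU, hNa⟩ :=
        hloc a (mem_insert a P) _ ((hUo.sdiff hP.isClosed).mem_nhds ha)
      exact hUP.diff_singleton_of_mem_nhds hN hNU hNa
    · rwa [sdiff_singleton_eq_self ha]

lemma F_q_self (i : Fin 3) : F i (q i) = q i := by
  rw [F, ← two_smul ℝ (q i), smul_smul]
  norm_num

lemma F_q_comm (i j : Fin 3) : F i (q j) = F j (q i) := by
  rw [F, F, add_comm]

lemma F_injective (i : Fin 3) : Function.Injective (F i) := fun _ _ h =>
  add_right_cancel (smul_right_injective (ℝ × ℝ) (by norm_num : (1 / 2 : ℝ) ≠ 0) h)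

lemma continuous_F (i : Fin 3) : Continuous (F i) := by
  unfold F; fun_prop

lemma dist_F (i : Fin 3) (x y : ℝ × ℝ) : dist (F i x) (F i y) = dist x y / 2 := by
  rw [F, F, dist_smul₀, dist_add_right, Real.norm_of_nonneg (by norm_num)]
  ring

lemma Fw_append (u v : List (Fin 3)) (x : ℝ × ℝ) : Fw (u ++ v) x = Fw u (Fw v x) := by
  induction u with
  | nil => rfl
  | cons i u ih => simp [Fw, ih]

lemma Fw_injective (w : List (Fin 3)) : Function.Injective (Fw w) := by
  induction w with
  | nil => exact Function.injective_id
  | cons i w ih => exact (F_injective i).comp ih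

lemma continuous_Fw (w : List (Fin 3)) : Continuous (Fw w) := by
  induction w with
  | nil => exact continuous_id
  | cons i w ih => exact (continuous_F i).comp ih

lemma dist_Fw (w : List (Fin 3)) (x y : ℝ × ℝ) :
    dist (Fw w x) (Fw w y) = dist x y / 2 ^ w.length := by
  induction w with
  | nil => simp [Fw]
  | cons i w ih =>
    simp only [Fw, Function.comp_apply, dist_F, ih, List.length_cons, pow_succ, div_div]

lemma Fw_replicate_q (n : ℕ) (i : Fin 3) : Fw (List.replicate n i) (q i) = q i := by
  induction n with
  | zero => rfl
  | succ n ih => simp only [List.replicate_succ, Fw, Function.comp_apply, ih, F_q_self]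

lemma q_mem_Vstar (k : Fin 3) : q k ∈ Vstar :=
  mem_iUnion.2 ⟨[], q k, by fin_cases k <;> simp, rfl⟩

lemma Fw_mem_Vstar (w : List (Fin 3)) {z : ℝ × ℝ} (hz : z ∈ Vstar) : Fw w z ∈ Vstar := by
  obtain ⟨v, y, hy, rfl⟩ := mem_iUnion.1 hz
  exact mem_iUnion.2 ⟨w ++ v, y, hy, Fw_append w v y⟩

lemma dist_le_of_mem_image_Fw {K : Set (ℝ × ℝ)} (hK : Bornology.IsBounded K)
    {w : List (Fin 3)} {x y : ℝ × ℝ} (hx : x ∈ Fw w '' K) (hy : y ∈ Fw w '' K) :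
    dist x y ≤ diam K / 2 ^ w.length := by
  obtain ⟨a, ha, rfl⟩ := hx
  obtain ⟨b, hb, rfl⟩ := hy
  rw [dist_Fw]
  gcongr
  exact dist_le_diam_of_mem hK ha hb

/-- Barycentric coordinates with respect to the triangle `q 0`, `q 1`, `q 2`. -/
noncomputable def baryCoord : Fin 3 → ℝ × ℝ → ℝ
  | 0 => fun x => 2 * x.2 / √3
  | 1 => fun x => 1 - x.1 - x.2 / √3
  | 2 => fun x => x.1 - x.2 / √3

lemma continuous_baryCoord (k : Fin 3) : Continuous (baryCoord k) := by
  fin_cases k <;> simp only [baryCoord] <;> fun_prop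

lemma baryCoord_F (k i : Fin 3) (x : ℝ × ℝ) :
    baryCoord k (F i x) = (baryCoord k x + if k = i then 1 else 0) / 2 := by
  have h3 : √3 ≠ 0 := by positivity
  fin_cases k <;> fin_cases i <;> simp [baryCoord, F, q] <;> field_simp <;> ring

lemma eq_q_of_one_le_baryCoord {i : Fin 3} {x : ℝ × ℝ} (hi : 1 ≤ baryCoord i x)
    (hnonneg : ∀ k, 0 ≤ baryCoord k x) : x = q i := by
  have h0 := hnonneg 0
  have h1 := hnonneg 1
  have h2 := hnonneg 2
  obtain ⟨t, ht, hx2⟩ : ∃ t, x.2 / √3 = t ∧ x.2 = √3 * t := ⟨_, rfl, by field_simp⟩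
  simp only [baryCoord, mul_div_assoc, ht] at h0 h1 h2
  fin_cases i <;> simp only [baryCoord, mul_div_assoc, ht] at hi <;> ext <;>
    simp only [q, hx2] <;> nlinarith [Real.sqrt_nonneg 3]

/-- `otherCells K w` is the union of the cells `Fw v '' K` with `v ≠ w` of length `w.length`. -/
noncomputable def otherCells (K : Set (ℝ × ℝ)) : List (Fin 3) → Set (ℝ × ℝ)
  | [] => ∅
  | c :: w => F c '' otherCells K w ∪ (F (c + 1) '' K ∪ F (c + 2) '' K)

lemma isCompact_otherCells {K : Set (ℝ × ℝ)} (hK : IsCompact K) (w : List (Fin 3)) :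
    IsCompact (otherCells K w) := by
  induction w with
  | nil => exact isCompact_empty
  | cons c w ih =>
    exact (ih.image (continuous_F c)).union
      ((hK.image (continuous_F _)).union (hK.image (continuous_F _)))

namespace Gasket

variable {SG : Set (ℝ × ℝ)} (hne : SG.Nonempty) (hcpt : IsCompact SG)
  (hself : SG = F 0 '' SG ∪ F 1 '' SG ∪ F 2 '' SG)
include hself

lemma image_F_subset (i : Fin 3) : F i '' SG ⊆ SG := by
  intro x hx
  rw [hself]
  fin_cases i
  exacts [Or.inl (Or.inl hx), Or.inl (Or.inr hx), Or.inr hx]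

lemma exists_F_eq {x : ℝ × ℝ} (hx : x ∈ SG) : ∃ i, ∃ y ∈ SG, F i y = x := by
  rw [hself] at hx
  rcases hx with (⟨y, hy, rfl⟩ | ⟨y, hy, rfl⟩) | ⟨y, hy, rfl⟩
  exacts [⟨0, y, hy, rfl⟩, ⟨1, y, hy, rfl⟩, ⟨2, y, hy, rfl⟩]

lemma image_Fw_subset (w : List (Fin 3)) : Fw w '' SG ⊆ SG := by
  induction w with
  | nil => simp [Fw]
  | cons i w ih =>
    rw [Fw, image_comp]
    exact (image_mono ih).trans (image_F_subset hself i)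

lemma exists_mem_image_Fw {x : ℝ × ℝ} (hx : x ∈ SG) (n : ℕ) :
    ∃ w : List (Fin 3), w.length = n ∧ x ∈ Fw w '' SG := by
  induction n generalizing x with
  | zero => exact ⟨[], rfl, x, hx, rfl⟩
  | succ n ih =>
    obtain ⟨i, y, hy, rfl⟩ := exists_F_eq hself hx
    obtain ⟨w, hw, z, hz, rfl⟩ := ih hy
    exact ⟨i :: w, by simp [hw], z, hz, rfl⟩

include hne hcpt in
lemma q_mem (i : Fin 3) : q i ∈ SG := by
  obtain ⟨x, hx⟩ := hne
  refine hcpt.isClosed.closure_subset (Metric.mem_closure_iff.2 fun ε hε => ?_)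
  obtain ⟨n, hn⟩ := exists_div_two_pow_lt (dist (q i) x) hε
  refine ⟨_, image_Fw_subset hself (List.replicate n i) ⟨x, hx, rfl⟩, ?_⟩
  rwa [← Fw_replicate_q n i, dist_Fw, List.length_replicate]

include hcpt in
lemma baryCoord_nonneg (k : Fin 3) {x : ℝ × ℝ} (hx : x ∈ SG) : 0 ≤ baryCoord k x := by
  obtain ⟨p, hp, hmin⟩ := hcpt.exists_isMinOn ⟨x, hx⟩ (continuous_baryCoord k).continuousOn
  obtain ⟨i, y, hy, rfl⟩ := exists_F_eq hself hp
  have hle : baryCoord k (F i y) ≤ baryCoord k y := hmin hy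
  have hc : (0 : ℝ) ≤ if k = i then 1 else 0 := by split_ifs <;> norm_num
  rw [baryCoord_F] at hle
  have hFy : 0 ≤ baryCoord k (F i y) := by rw [baryCoord_F]; linarith
  exact hFy.trans (hmin hx)

include hcpt in
lemma mem_Vstar_of_mem_image_F_inter {i j : Fin 3} (hij : i ≠ j) {x : ℝ × ℝ}
    (hx : x ∈ F i '' SG ∩ F j '' SG) : x ∈ Vstar := by
  obtain ⟨⟨u, hu, rfl⟩, v, hv, he⟩ := hx
  have hbary := congrArg (baryCoord i) he
  rw [baryCoord_F, baryCoord_F, if_neg hij, if_pos rfl] at hbary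
  have hvq : v = q i := eq_q_of_one_le_baryCoord
    (by linarith [baryCoord_nonneg hcpt hself i hu]) (baryCoord_nonneg hcpt hself · hv)
  rw [← he, hvq]
  exact Fw_mem_Vstar [j] (q_mem_Vstar i)

include hne hcpt in
lemma image_Fw_subset_of_forall_append {s t : Set (ℝ × ℝ)} (hst : Disjoint s t)
    (w : List (Fin 3)) (hcells : ∀ i, Fw (w ++ [i]) '' SG ⊆ s ∨ Fw (w ++ [i]) '' SG ⊆ t)
    (h0 : Fw (w ++ [0]) '' SG ⊆ s) : Fw w '' SG ⊆ s := by
  have hmem (j k : Fin 3) : Fw w (F j (q k)) ∈ Fw (w ++ [j]) '' SG :=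
    ⟨q k, q_mem hne hcpt hself k, Fw_append w [j] (q k)⟩
  have hcell_s (i : Fin 3) : Fw (w ++ [i]) '' SG ⊆ s := by
    refine (hcells i).resolve_right fun hit => hst.notMem_of_mem_left (h0 (hmem 0 i)) ?_
    rw [F_q_comm]
    exact hit (hmem i 0)
  rintro _ ⟨x, hx, rfl⟩
  obtain ⟨i, y, hy, rfl⟩ := exists_F_eq hself hx
  exact hcell_s i ⟨y, hy, Fw_append w [i] y⟩

include hne hcpt in
theorem isPreconnected : IsPreconnected SG := by
  rw [isPreconnected_iff_subset_of_fully_disjoint_closed hcpt.isClosed]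
  intro u v hu hv hcover huv
  obtain ⟨δ, hδ, hball⟩ := lebesgue_number_lemma_of_metric_sUnion (c := {uᶜ, vᶜ}) hcpt
    (by simp [hu.isOpen_compl, hv.isOpen_compl])
    (fun x _ => by by_cases hxu : x ∈ u <;> simp [hxu, huv.notMem_of_mem_left])
  obtain ⟨n, hn⟩ := exists_div_two_pow_lt (diam SG) hδ
  have hsmall (w : List (Fin 3)) (hw : n ≤ w.length) : Fw w '' SG ⊆ u ∨ Fw w '' SG ⊆ v := by
    obtain ⟨x, hx⟩ := hne
    obtain ⟨c, hc, hxc⟩ := hball (Fw w x) (image_Fw_subset hself w ⟨x, hx, rfl⟩)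
    have hcell : Fw w '' SG ⊆ SG ∩ c := fun y hy => ⟨image_Fw_subset hself w hy, hxc <| by
      refine mem_ball.2 ((dist_le_of_mem_image_Fw hcpt.isBounded hy ⟨x, hx, rfl⟩).trans_lt ?_)
      exact lt_of_le_of_lt (by gcongr; norm_num) hn⟩
    rcases hc with rfl | rfl
    · exact Or.inr fun y hy => (hcover (hcell hy).1).resolve_left (hcell hy).2
    · exact Or.inl fun y hy => (hcover (hcell hy).1).resolve_right (hcell hy).2
  -- pass from the small cells up to `SG` one level at a time
  have hcells (k : ℕ) : ∀ w : List (Fin 3), n ≤ w.length + k →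
      Fw w '' SG ⊆ u ∨ Fw w '' SG ⊆ v := by
    induction k with
    | zero => exact hsmall
    | succ k ih =>
      intro w hw
      have happ (i : Fin 3) : Fw (w ++ [i]) '' SG ⊆ u ∨ Fw (w ++ [i]) '' SG ⊆ v :=
        ih _ (by rw [List.length_append, List.length_singleton]; omega)
      rcases happ 0 with h0 | h0
      · exact Or.inl (image_Fw_subset_of_forall_append hne hcpt hself huv w happ h0)
      · exact Or.inr (image_Fw_subset_of_forall_append hne hcpt hself huv.symm w
          (fun i => (happ i).symm) h0)
  simpa [Fw] using hcells n [] (by simp)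

lemma otherCells_subset (w : List (Fin 3)) : otherCells SG w ⊆ SG := by
  induction w with
  | nil => exact empty_subset _
  | cons c w ih =>
    exact union_subset ((image_mono ih).trans (image_F_subset hself c))
      (union_subset (image_F_subset hself _) (image_F_subset hself _))

lemma mem_otherCells {w : List (Fin 3)} {x : ℝ × ℝ} (hx : x ∈ SG) (hxw : x ∉ Fw w '' SG) :
    x ∈ otherCells SG w := by
  induction w generalizing x with
  | nil => exact hxw ⟨x, hx, rfl⟩
  | cons c w ih =>
    obtain ⟨d, y, hy, rfl⟩ := exists_F_eq hself hx
    obtain rfl | rfl | rfl := Fin.eq_or_eq_add_one_or_eq_add_two c d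
    · refine Or.inl ⟨y, ih hy ?_, rfl⟩
      rintro ⟨z, hz, rfl⟩
      exact hxw ⟨z, hz, rfl⟩
    · exact Or.inr (Or.inl ⟨y, hy, rfl⟩)
    · exact Or.inr (Or.inr ⟨y, hy, rfl⟩)

include hcpt in
lemma notMem_otherCells {w : List (Fin 3)} {p : ℝ × ℝ} (hp : p ∈ Fw w '' SG) (hpV : p ∉ Vstar) :
    p ∉ otherCells SG w := by
  induction w generalizing p with
  | nil => exact notMem_empty p
  | cons c w ih =>
    obtain ⟨z, hz, rfl⟩ := hp
    have hpc : Fw (c :: w) z ∈ F c '' SG := ⟨Fw w z, image_Fw_subset hself w ⟨z, hz, rfl⟩, rfl⟩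
    rintro (⟨y, hy, hyz⟩ | hd | hd)
    · rw [F_injective c hyz] at hy
      exact ih ⟨z, hz, rfl⟩ (fun h => hpV (Fw_mem_Vstar [c] h)) hy
    · exact hpV (mem_Vstar_of_mem_image_F_inter hcpt hself (by simp) ⟨hpc, hd⟩)
    · exact hpV (mem_Vstar_of_mem_image_F_inter hcpt hself (by simp) ⟨hpc, hd⟩)

include hne hcpt in
lemma q_mem_otherCells {t c : Fin 3} (htc : t ≠ c) (w : List (Fin 3)) :
    q t ∈ otherCells SG (c :: w) := by
  have hq : q t ∈ F t '' SG := ⟨q t, q_mem hne hcpt hself t, F_q_self t⟩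
  obtain rfl | rfl | rfl := Fin.eq_or_eq_add_one_or_eq_add_two c t
  exacts [absurd rfl htc, Or.inr (Or.inl hq), Or.inr (Or.inr hq)]

include hne hcpt in
lemma isPreconnected_otherCells (w : List (Fin 3)) : IsPreconnected (otherCells SG w) := by
  have hSG := isPreconnected hne hcpt hself
  have hq (i : Fin 3) : q i ∈ SG := q_mem hne hcpt hself i
  induction w with
  | nil => exact isPreconnected_empty
  | cons c w ih =>
    have hpair : IsPreconnected (F (c + 1) '' SG ∪ F (c + 2) '' SG) :=
      IsPreconnected.union' ⟨F (c + 1) (q (c + 2)), ⟨_, hq _, rfl⟩, F_q_comm _ _ ▸ ⟨_, hq _, rfl⟩⟩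
        (hSG.image _ (continuous_F _).continuousOn) (hSG.image _ (continuous_F _).continuousOn)
    cases w with
    | nil => simpa [otherCells] using hpair
    | cons d w =>
      obtain ⟨t, htd, htc⟩ := Fin.exists_ne_and_eq_add_one_or_eq_add_two c d
      have hqt : q t ∈ otherCells SG (d :: w) := q_mem_otherCells hne hcpt hself htd w
      refine IsPreconnected.union' ⟨F c (q t), ⟨q t, hqt, rfl⟩, ?_⟩
        (ih.image _ (continuous_F c).continuousOn) hpair
      rw [F_q_comm]
      rcases htc with rfl | rfl
      exacts [Or.inl ⟨q c, hq c, rfl⟩, Or.inr ⟨q c, hq c, rfl⟩]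

include hne hcpt in
lemma isPreconnected_diff_singleton {z : ℝ × ℝ} (hz : z ∈ SG) (hzV : z ∉ Vstar) :
    IsPreconnected (SG \ {z}) := by
  obtain ⟨c, y, hy, rfl⟩ := exists_F_eq hself hz
  refine isPreconnected_of_forall (q (c + 1)) fun x ⟨hx, hxz⟩ => ?_
  obtain ⟨n, hn⟩ := exists_div_two_pow_lt (diam SG) (dist_pos.2 hxz)
  obtain ⟨w, hw, hzw⟩ := exists_mem_image_Fw hself hz (n + 1)
  obtain ⟨d, w, rfl⟩ := List.exists_cons_of_length_eq_add_one hw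
  obtain rfl : d = c := by
    by_contra hdc
    obtain ⟨u, hu, hzu⟩ := hzw
    exact hzV (mem_Vstar_of_mem_image_F_inter hcpt hself hdc
      ⟨⟨Fw w u, image_Fw_subset hself w ⟨u, hu, rfl⟩, hzu⟩, y, hy, rfl⟩)
  have hxw : x ∉ Fw (d :: w) '' SG := fun hxw => by
    have := dist_le_of_mem_image_Fw hcpt.isBounded hxw hzw
    rw [hw] at this
    exact (this.trans (by gcongr <;> simp)).not_gt hn
  exact ⟨otherCells SG (d :: w),
    fun p hp => ⟨otherCells_subset hself _ hp, fun hpz => notMem_otherCells hcpt hself hzw hzV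
      (mem_singleton_iff.1 hpz ▸ hp)⟩,
    q_mem_otherCells hne hcpt hself (by simp) w, mem_otherCells hself hx hxw,
    isPreconnected_otherCells hne hcpt hself _⟩

include hcpt in
lemma image_Fw_mem_nhdsWithin {w : List (Fin 3)} {p : ℝ × ℝ} (hp : p ∈ Fw w '' SG)
    (hpV : p ∉ Vstar) : Fw w '' SG ∈ 𝓝[SG] p :=
  mem_nhdsWithin.2 ⟨(otherCells SG w)ᶜ, (isCompact_otherCells hcpt w).isClosed.isOpen_compl,
    notMem_otherCells hcpt hself hp hpV,
    fun _ ⟨hxo, hx⟩ => by_contra fun hxw => hxo (mem_otherCells hself hx hxw)⟩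

include hcpt in
lemma iUnion_image_Fw_mem_nhdsWithin (y : ℝ × ℝ) (n : ℕ) :
    (⋃ w : {w : List (Fin 3) // w.length = n ∧ y ∈ Fw w '' SG}, Fw w.1 '' SG) ∈ 𝓝[SG] y := by
  set N := ⋃ w ∈ {w : List (Fin 3) | w.length = n ∧ y ∉ Fw w '' SG}, Fw w '' SG
  have hN : IsClosed N :=
    ((List.finite_length_eq (Fin 3) n).subset fun w hw => hw.1).isClosed_biUnion
      fun w _ => (hcpt.image (continuous_Fw w)).isClosed
  refine mem_nhdsWithin.2 ⟨Nᶜ, hN.isOpen_compl, ?_, fun x ⟨hxN, hx⟩ => ?_⟩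
  · simp [N]
  · obtain ⟨w, hw, hxw⟩ := exists_mem_image_Fw hself hx n
    exact mem_iUnion.2 ⟨⟨w, hw, by_contra fun hyw => hxN (mem_biUnion ⟨hw, hyw⟩ hxw)⟩, hxw⟩

include hne hcpt in
theorem locallyConnectedSpace : LocallyConnectedSpace SG := by
  rw [locallyConnectedSpace_iff_connected_subsets]
  intro y U hU
  obtain ⟨ε, hε, hball⟩ := Metric.mem_nhds_iff.1 hU
  obtain ⟨n, hn⟩ := exists_div_two_pow_lt (diam SG) hε
  refine ⟨_, preimage_coe_mem_nhds_subtype.2 (iUnion_image_Fw_mem_nhdsWithin hcpt hself y n),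
    isPreconnected_preimage_val (iUnion_subset fun w => image_Fw_subset hself w.1) ?_,
    fun x hx => hball ?_⟩
  · exact isPreconnected_iUnion ⟨y, mem_iInter.2 fun w => w.2.2⟩ fun w =>
      (isPreconnected hne hcpt hself).image _ (continuous_Fw _).continuousOn
  · obtain ⟨w, hxw⟩ := mem_iUnion.1 hx
    exact mem_ball.2 ((dist_le_of_mem_image_Fw hcpt.isBounded hxw w.2.2).trans_lt (by rwa [w.2.1]))

include hne hcpt in
lemma exists_mem_nhds_isPreconnected_diff_singleton {p : SG} (hpV : (p : ℝ × ℝ) ∉ Vstar) :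
    ∀ V ∈ 𝓝 p, ∃ N ∈ 𝓝 p, N ⊆ V ∧ IsPreconnected (N \ {p}) := by
  intro V hV
  obtain ⟨ε, hε, hball⟩ := Metric.mem_nhds_iff.1 hV
  obtain ⟨n, hn⟩ := exists_div_two_pow_lt (diam SG) hε
  obtain ⟨w, hw, z, hz, hzp⟩ := exists_mem_image_Fw hself p.2 n
  have hpw : (p : ℝ × ℝ) ∈ Fw w '' SG := ⟨z, hz, hzp⟩
  refine ⟨(↑) ⁻¹' (Fw w '' SG), preimage_coe_mem_nhds_subtype.2
    (image_Fw_mem_nhdsWithin hcpt hself hpw hpV), fun x hx => hball (mem_ball.2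
      ((dist_le_of_mem_image_Fw hcpt.isBounded hx hpw).trans_lt (by rwa [hw]))), ?_⟩
  have hdiff : (↑) ⁻¹' (Fw w '' SG) \ {p} = ((↑) : SG → ℝ × ℝ) ⁻¹' (Fw w '' (SG \ {z})) := by
    rw [image_sdiff (Fw_injective w), image_singleton, hzp, preimage_sdiff]
    congr 1
    ext x
    simp [Subtype.ext_iff]
  rw [hdiff]
  exact isPreconnected_preimage_val ((image_mono sdiff_subset).trans (image_Fw_subset hself w))
    ((isPreconnected_diff_singleton hne hcpt hself hz fun h => hpV (hzp ▸ Fw_mem_Vstar w h)).image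
      _ (continuous_Fw w).continuousOn)

end Gasket

theorem statement2_general (SG : Set (ℝ × ℝ)) (hcpt : IsCompact SG)
    (hself : SG = F 0 '' SG ∪ F 1 '' SG ∪ F 2 '' SG)
    (f : SG → ℝ) (hf : Continuous f)
    (hfin : {x : SG | f x = 0}.Finite)
    (Z₀ : Set SG) (hZ₀ : Z₀ = {x : SG | f x = 0 ∧ (x : ℝ × ℝ) ∈ Vstar}) :
    ∀ x ∈ Z₀ᶜ,
      (∀ y ∈ connectedComponentIn Z₀ᶜ x, 0 ≤ f y) ∨
      (∀ y ∈ connectedComponentIn Z₀ᶜ x, f y ≤ 0) := by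
  intro x _
  have hne : SG.Nonempty := ⟨x, x.2⟩
  have := Gasket.locallyConnectedSpace hne hcpt hself
  set D := connectedComponentIn Z₀ᶜ x
  have hDopen : IsOpen D :=
    (hfin.subset (hZ₀ ▸ fun y hy => hy.1)).isClosed.isOpen_compl.connectedComponentIn
  have hzeros : ∀ p ∈ {y | f y = 0} ∩ D, ∀ V ∈ 𝓝 p, ∃ N ∈ 𝓝 p, N ⊆ V ∧ IsPreconnected (N \ {p}) :=
    fun p ⟨hp0, hpD⟩ => Gasket.exists_mem_nhds_isPreconnected_diff_singleton hne hcpt hself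
      fun hpV => connectedComponentIn_subset _ _ hpD (hZ₀ ▸ ⟨hp0, hpV⟩)
  have hD : IsPreconnected (D \ {y | f y = 0}) := by
    rw [← sdiff_inter_self_eq_sdiff]
    exact isPreconnected_connectedComponentIn.diff_of_finite hDopen (hfin.inter_of_left D) hzeros
  by_contra h
  push Not at h
  obtain ⟨⟨a, haD, hfa⟩, b, hbD, hfb⟩ := h
  obtain ⟨c, ⟨-, hc0⟩, hfc⟩ :=
    hD.intermediate_value ⟨haD, hfa.ne⟩ ⟨hbD, hfb.ne'⟩ hf.continuousOn ⟨hfa.le, hfb.le⟩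
  exact hc0 hfc

/-- Let `SG` be the Sierpinski gasket and `f : SG → ℝ` continuous with finite zero
set `Z`; set `Z₀ = Z ∩ V*`. Then on each connected component `D` of `SG \ Z₀`
(in the subspace topology of `SG`) either `f ≥ 0` on `D` or `f ≤ 0` on `D`. -/
theorem statement2 (SG : Set (ℝ × ℝ)) (hne : SG.Nonempty) (hcpt : IsCompact SG)
    (hself : SG = F 0 '' SG ∪ F 1 '' SG ∪ F 2 '' SG)
    (f : SG → ℝ) (hf : Continuous f)
    (hfin : {x : SG | f x = 0}.Finite)
    (Z₀ : Set SG) (hZ₀ : Z₀ = {x : SG | f x = 0 ∧ (x : ℝ × ℝ) ∈ Vstar}) :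
    ∀ x ∈ Z₀ᶜ,
      (∀ y ∈ connectedComponentIn Z₀ᶜ x, 0 ≤ f y) ∨
      (∀ y ∈ connectedComponentIn Z₀ᶜ x, f y ≤ 0) :=
  statement2_general SG hcpt hself f hf hfin Z₀ hZ₀
end

section
/- (Three-term recurrence.) For every n ≥ 1 one has f_{n+1} = s_{n+1} + a_n·s_n + b̃_n·s_{n−1}, where a_n = ⟨f_{n+1}, s_n⟩_S/‖s_n‖_S² and b̃_n = ⟨f_{n+1}, s_{n−1}⟩_S/‖s_{n−1}‖_S²; moreover f₁ = s₁ + (⟨f₁, s₀⟩_S/‖s₀‖_S²)·s₀. -/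
open Filter RealInnerProductSpace

variable {H : Type*} [NormedAddCommGroup H] [InnerProductSpace ℝ H]

/-- `Wlt P n` is the span of `P 0, …, P (n-1)`; thus `Wlt P 0 = ⊥ = W_{-1}` and
`Wlt P (n+1)` is the space `W_n = span{P_0, …, P_n}`. -/
def Wlt (P : ℕ → H) (n : ℕ) : Submodule ℝ H := Submodule.span ℝ (P '' Set.Iio n)

/-- `Wtot P` is the space `W = ⋃ₙ Wₙ` of all polynomials. -/
def Wtot (P : ℕ → H) : Submodule ℝ H := Submodule.span ℝ (Set.range P)

/-- The Sobolev inner product `⟨f, g⟩_S = ⟨f, g⟩₂ + χ⟨Δf, Δg⟩₂`. -/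
noncomputable def innerS (Δ : H →ₗ[ℝ] H) (χ : ℝ) (f g : H) : ℝ :=
  ⟪ f, g ⟫ + χ * ⟪ Δ f, Δ g ⟫

/-- The Sobolev norm `‖f‖_S = √(‖f‖₂² + χ‖Δf‖₂²)`. -/
noncomputable def normS (Δ : H →ₗ[ℝ] H) (χ : ℝ) (f : H) : ℝ :=
  Real.sqrt (‖f‖ ^ 2 + χ * ‖Δ f‖ ^ 2)

/-!
Since `Δ f_{n+1} = p_n` is monic of degree `n`, `f_{n+1}` is monic of degree `n + 1`, so
`f_{n+1} - s_{n+1} ∈ W_n` expands in the `S`-orthogonal basis `s_0, …, s_n` with the Fourier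
coefficients `⟨f_{n+1}, s_j⟩_S / ‖s_j‖_S²`. These vanish for `j ≤ n - 2`: by the symmetry of `𝒢`
and `Δ𝒢 = id`, `⟨f_{n+1}, w⟩_S = ⟨p_n, 𝒢w⟩₂ + χ⟨p_n, Δw⟩₂`, and for `w ∈ W_{n-2}` both `𝒢w` and
`Δw` lie in `W_{n-1}`, which is orthogonal to `p_n`.
-/

open Finset

section Wlt

variable (P : ℕ → H)

lemma Wlt_mono {m n : ℕ} (h : m ≤ n) : Wlt P m ≤ Wlt P n :=
  Submodule.span_mono (Set.image_mono fun _ hx => lt_of_lt_of_le hx h)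

lemma P_mem_Wlt {j m : ℕ} (h : j < m) : P j ∈ Wlt P m :=
  Submodule.subset_span ⟨j, h, rfl⟩

lemma Wlt_le_Wtot (m : ℕ) : Wlt P m ≤ Wtot P :=
  Submodule.span_mono (Set.image_subset_range _ _)

lemma Wlt_zero : Wlt P 0 = ⊥ := by
  simp [Wlt]

lemma Wlt_succ (m : ℕ) : Wlt P (m + 1) = Wlt P m ⊔ Submodule.span ℝ {P m} := by
  have hIio : Set.Iio (m + 1) = insert m (Set.Iio m) := by
    ext x
    simp only [Set.mem_Iio, Set.mem_insert_iff]
    omega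
  rw [Wlt, hIio, Set.image_insert_eq, Submodule.span_insert, sup_comm, Wlt]

lemma Wlt_succ_eq_sup_span_of_sub_mem {q : H} {m : ℕ} (hq : q - P m ∈ Wlt P m) :
    Wlt P (m + 1) = Wlt P m ⊔ Submodule.span ℝ {q} := by
  have hP : P m ∈ Wlt P m ⊔ Submodule.span ℝ {q} := by
    rw [← sub_sub_cancel q (P m)]
    exact sub_mem (Submodule.mem_sup_right (Submodule.mem_span_singleton_self q))
      (Submodule.mem_sup_left hq)
  have hq' : q ∈ Wlt P m ⊔ Submodule.span ℝ {P m} := by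
    rw [← sub_add_cancel q (P m)]
    exact add_mem (Submodule.mem_sup_left hq)
      (Submodule.mem_sup_right (Submodule.mem_span_singleton_self _))
  rw [Wlt_succ]
  exact le_antisymm (sup_le le_sup_left ((Submodule.span_singleton_le_iff_mem _ _).2 hP))
    (sup_le le_sup_left ((Submodule.span_singleton_le_iff_mem _ _).2 hq'))

lemma mem_Wlt_succ_of_sub_mem {q : H} {m : ℕ} (hq : q - P m ∈ Wlt P m) : q ∈ Wlt P (m + 1) := by
  rw [Wlt_succ_eq_sup_span_of_sub_mem P hq]
  exact Submodule.mem_sup_right (Submodule.mem_span_singleton_self q)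

variable {P}

lemma P_notMem_Wlt (hP : LinearIndependent ℝ P) (m : ℕ) : P m ∉ Wlt P m :=
  hP.notMem_span_image (by simp)

lemma ne_zero_of_sub_mem_Wlt (hP : LinearIndependent ℝ P) {q : H} {m : ℕ}
    (hq : q - P m ∈ Wlt P m) : q ≠ 0 := by
  rintro rfl
  exact P_notMem_Wlt hP m (by simpa using neg_mem hq)

end Wlt

section innerS

variable (Δ : H →ₗ[ℝ] H) (χ : ℝ)

lemma innerS_symm (f g : H) : innerS Δ χ f g = innerS Δ χ g f := by
  simp only [innerS, real_inner_comm]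

lemma innerS_self (f : H) : innerS Δ χ f f = ‖f‖ ^ 2 + χ * ‖Δ f‖ ^ 2 := by
  simp only [innerS, real_inner_self_eq_norm_sq]

lemma innerS_add_left (f g h : H) :
    innerS Δ χ (f + g) h = innerS Δ χ f h + innerS Δ χ g h := by
  simp only [innerS, map_add, inner_add_left]
  ring

lemma innerS_sub_left (f g h : H) :
    innerS Δ χ (f - g) h = innerS Δ χ f h - innerS Δ χ g h := by
  simp only [innerS, map_sub, inner_sub_left]
  ring

lemma innerS_smul_left (c : ℝ) (f g : H) :
    innerS Δ χ (c • f) g = c * innerS Δ χ f g := by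
  simp only [innerS, map_smul, real_inner_smul_left]
  ring

variable {χ}

lemma innerS_self_pos (hχ : 0 ≤ χ) {f : H} (hf : f ≠ 0) : 0 < innerS Δ χ f f := by
  rw [innerS_self]
  have := norm_pos_iff.2 hf
  positivity

end innerS

section Sobolev

variable {P : ℕ → H} {Δ : H →ₗ[ℝ] H} {χ : ℝ} {s : ℕ → H}
  (hsmonic : ∀ n, s n - P n ∈ Wlt P n)
  (hsortho : ∀ n, ∀ w ∈ Wlt P n, innerS Δ χ (s n) w = 0)

include hsmonic hsortho

lemma innerS_s_s_of_lt {i j : ℕ} (h : j < i) : innerS Δ χ (s i) (s j) = 0 :=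
  hsortho i _ (Wlt_mono P h (mem_Wlt_succ_of_sub_mem P (hsmonic j)))

lemma eq_sum_innerS_smul_of_mem_Wlt (hP : LinearIndependent ℝ P) (hχ : 0 ≤ χ) {m : ℕ} {v : H}
    (hv : v ∈ Wlt P m) :
    v = ∑ j ∈ range m, (innerS Δ χ v (s j) / innerS Δ χ (s j) (s j)) • s j := by
  induction m generalizing v with
  | zero => simpa [Wlt_zero] using hv
  | succ m ih =>
    rw [Wlt_succ_eq_sup_span_of_sub_mem P (hsmonic m)] at hv
    obtain ⟨u, hu, _, hz, rfl⟩ := Submodule.mem_sup.1 hv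
    obtain ⟨c, rfl⟩ := Submodule.mem_span_singleton.1 hz
    have hsm := (innerS_self_pos Δ hχ (ne_zero_of_sub_mem_Wlt hP (hsmonic m))).ne'
    have hlast : innerS Δ χ (u + c • s m) (s m) / innerS Δ χ (s m) (s m) = c := by
      rw [innerS_add_left, innerS_smul_left, innerS_symm, hsortho m u hu, zero_add,
        mul_div_assoc, div_self hsm, mul_one]
    have hinit : ∀ j ∈ range m, innerS Δ χ (u + c • s m) (s j) = innerS Δ χ u (s j) := by
      intro j hj
      rw [innerS_add_left, innerS_smul_left,
        innerS_s_s_of_lt hsmonic hsortho (mem_range.1 hj), mul_zero, add_zero]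
    rw [sum_range_succ, hlast, sum_congr rfl fun j hj => by rw [hinit j hj], ← ih hu]

lemma eq_add_sum_of_sub_mem_Wlt (hP : LinearIndependent ℝ P) (hχ : 0 ≤ χ) {n : ℕ} {f : H}
    (hf : f - P (n + 1) ∈ Wlt P (n + 1)) :
    f = s (n + 1) + ∑ j ∈ range (n + 1),
      (innerS Δ χ f (s j) / innerS Δ χ (s j) (s j)) • s j := by
  have hmem : f - s (n + 1) ∈ Wlt P (n + 1) := by
    simpa using sub_mem hf (hsmonic (n + 1))
  refine eq_add_of_sub_eq' ((eq_sum_innerS_smul_of_mem_Wlt hsmonic hsortho hP hχ hmem).trans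
    (sum_congr rfl fun j hj => ?_))
  rw [innerS_sub_left, innerS_s_s_of_lt hsmonic hsortho (by simpa using mem_range.1 hj),
    sub_zero]

end Sobolev

section Laplacian

variable {P : ℕ → H} {Δ : H →ₗ[ℝ] H}
  (hΔ0 : Δ (P 0) = 0) (hΔsucc : ∀ n, Δ (P (n + 1)) = P n)

include hΔ0 hΔsucc

lemma apply_mem_Wlt_of_mem_Wlt_succ {m : ℕ} {u : H} (hu : u ∈ Wlt P (m + 1)) :
    Δ u ∈ Wlt P m := by
  refine (Submodule.map_span_le Δ _ _).2 ?_ (Submodule.mem_map_of_mem hu)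
  rintro _ ⟨j, hj, rfl⟩
  cases j with
  | zero => simp [hΔ0]
  | succ k =>
    rw [hΔsucc]
    exact P_mem_Wlt P (Nat.succ_lt_succ_iff.1 hj)

lemma sub_mem_Wlt_of_apply_sub_mem (hP : LinearIndependent ℝ P) {n : ℕ} {f : H}
    (hf : f ∈ Wlt P (n + 2)) (hΔf : Δ f - P n ∈ Wlt P n) : f - P (n + 1) ∈ Wlt P (n + 1) := by
  rw [Wlt_succ] at hf
  obtain ⟨y, hy, _, hz, rfl⟩ := Submodule.mem_sup.1 hf
  obtain ⟨c, rfl⟩ := Submodule.mem_span_singleton.1 hz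
  have hc : (c - 1) • P n ∈ Wlt P n := by
    have e : (c - 1) • P n = (Δ (y + c • P (n + 1)) - P n) - Δ y := by
      rw [map_add, map_smul, hΔsucc, sub_smul, one_smul]
      abel
    rw [e]
    exact sub_mem hΔf (apply_mem_Wlt_of_mem_Wlt_succ hΔ0 hΔsucc hy)
  obtain rfl : c = 1 := by
    by_contra hc1
    exact P_notMem_Wlt hP n ((Submodule.smul_mem_iff _ (sub_ne_zero.2 hc1)).1 hc)
  rwa [one_smul, add_sub_cancel_right]

lemma innerS_green_eq_zero {G : H →ₗ[ℝ] H} (χ : ℝ)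
    (hGsym : ∀ u ∈ Wtot P, ∀ v ∈ Wtot P, ⟪ G u, v ⟫ = ⟪ u, G v ⟫)
    (hGinv : ∀ u ∈ Wtot P, Δ (G u) = u)
    (hGmap : ∀ n, ∀ u ∈ Wlt P (n + 1), G u ∈ Wlt P (n + 2))
    {n m : ℕ} (hmn : m + 1 ≤ n) {q : H} (hq : q ∈ Wtot P) (hqorth : ∀ w ∈ Wlt P n, ⟪ q, w ⟫ = 0)
    {w : H} (hw : w ∈ Wlt P m) : innerS Δ χ (G q) w = 0 := by
  have hGw : G w ∈ Wlt P (m + 1) := by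
    cases m with
    | zero =>
      rw [Wlt_zero, Submodule.mem_bot] at hw
      simp [hw]
    | succ m => exact hGmap m w hw
  have hΔw : Δ w ∈ Wlt P m :=
    apply_mem_Wlt_of_mem_Wlt_succ hΔ0 hΔsucc (Wlt_mono P m.le_succ hw)
  rw [innerS, hGsym q hq w (Wlt_le_Wtot P m hw), hGinv q hq, hqorth _ (Wlt_mono P hmn hGw),
    hqorth _ (Wlt_mono P (by omega) hΔw), mul_zero, add_zero]

end Laplacian

/-- Three-term recurrence: for `n ≥ 1`, `f_{n+1} = s_{n+1} + a_n s_n + b̃_n s_{n−1}` with the stated coefficients, and `f₁ = s₁ + (⟨f₁, s₀⟩_S/‖s₀‖_S²) s₀`. -/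
theorem statement5
    (P : ℕ → H) (hP : LinearIndependent ℝ P)
    (Δ G : H →ₗ[ℝ] H)
    (hΔ0 : Δ (P 0) = 0) (hΔsucc : ∀ n, Δ (P (n + 1)) = P n)
    (hGsym : ∀ u ∈ Wtot P, ∀ v ∈ Wtot P, ⟪ G u, v ⟫ = ⟪ u, G v ⟫)
    (hGinv : ∀ u ∈ Wtot P, Δ (G u) = u)
    (hGmap : ∀ n, ∀ u ∈ Wlt P (n + 1), G u ∈ Wlt P (n + 2))
    (χ : ℝ) (hχ : 0 < χ)
    (p : ℕ → H)
    (hpmonic : ∀ n, p n - P n ∈ Wlt P n)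
    (hportho : ∀ n, ∀ w ∈ Wlt P n, ⟪ p n, w ⟫ = 0)
    (s : ℕ → H)
    (hsmonic : ∀ n, s n - P n ∈ Wlt P n)
    (hsortho : ∀ n, ∀ w ∈ Wlt P n, innerS Δ χ (s n) w = 0)
    : (∀ n, 1 ≤ n →
      G (p n) = s (n + 1)
        + (innerS Δ χ (G (p n)) (s n) / (‖s n‖ ^ 2 + χ * ‖Δ (s n)‖ ^ 2)) • s n
        + (innerS Δ χ (G (p n)) (s (n - 1)) /
            (‖s (n - 1)‖ ^ 2 + χ * ‖Δ (s (n - 1))‖ ^ 2)) • s (n - 1)) ∧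
      G (p 0) = s 1
        + (innerS Δ χ (G (p 0)) (s 0) / (‖s 0‖ ^ 2 + χ * ‖Δ (s 0)‖ ^ 2)) • s 0 := by
  have hpW (n : ℕ) : p n ∈ Wtot P :=
    Wlt_le_Wtot P _ (mem_Wlt_succ_of_sub_mem P (hpmonic n))
  have hexpand (n : ℕ) := eq_add_sum_of_sub_mem_Wlt hsmonic hsortho hP hχ.le
    (sub_mem_Wlt_of_apply_sub_mem hΔ0 hΔsucc hP (hGmap n _ (mem_Wlt_succ_of_sub_mem P (hpmonic n)))
      (by rw [hGinv _ (hpW n)]; exact hpmonic n))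
  simp only [← innerS_self]
  refine ⟨fun n hn => ?_, (hexpand 0).trans (by rw [sum_range_one])⟩
  obtain ⟨m, rfl⟩ : ∃ m, n = m + 1 := ⟨n - 1, by omega⟩
  refine (hexpand (m + 1)).trans ?_
  rw [sum_range_succ, sum_range_succ, sum_eq_zero fun j hj => ?_, zero_add, add_tsub_cancel_right,
    add_comm (_ • s m), ← add_assoc]
  rw [innerS_green_eq_zero hΔ0 hΔsucc χ hGsym hGinv hGmap (m := j + 1) (by simpa using hj) (hpW _)
    (hportho _) (mem_Wlt_succ_of_sub_mem P (hsmonic j)), zero_div, zero_smul]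
end
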